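/- Let P ⊆ ℝⁿ be a simple polygon with finitely many vertices whose vertices are not all collinear (i.e., P is not contained in a straight line), and let p ≥ 1. Then the global curvature energy of P is infinite: U_p(P) = ∞. -/

import Mathlib

open MeasureTheory Real
open scoped ENNReal NNReal Classical

/-- The Menger curvature of three points in `ℝⁿ`: the reciprocal of the circumradius,
`κ(x,y,z) = 2 dist(z, L_{x,y}) / (|x-z| |y-z|)` for pairwise distinct non-collinear points,
and `0` otherwise. -/
noncomputable def menger {n : ℕ} (x y z : EuclideanSpace ℝ (Fin n)) : ℝ :=
  if x ≠ y ∧ y ≠ z ∧ x ≠ z ∧ ¬ Collinear ℝ ({x, y, z} : Set (EuclideanSpace ℝ (Fin n)))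
  then 2 * Metric.infDist z (affineSpan ℝ ({x, y} : Set (EuclideanSpace ℝ (Fin n))) :
      Set (EuclideanSpace ℝ (Fin n))) / (dist x z * dist y z)
  else 0

/-- The point `(a, b) ∈ ℝ²` (with the Euclidean metric). -/
noncomputable def pt (a b : ℝ) : EuclideanSpace ℝ (Fin 2) :=
  (WithLp.equiv 2 (Fin 2 → ℝ)).symm ![a, b]

/-- Integral Menger curvature `M_p(X)` (innermost integration in `x`). -/
noncomputable def Mp {n : ℕ} (p : ℝ) (X : Set (EuclideanSpace ℝ (Fin n))) : ℝ≥0∞ :=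
  ∫⁻ z in X, ∫⁻ y in X, ∫⁻ x in X,
    (ENNReal.ofReal (menger x y z)) ^ p ∂μH[1] ∂μH[1] ∂μH[1]

/-- Intermediate energy `I_p(X)`. -/
noncomputable def Ip {n : ℕ} (p : ℝ) (X : Set (EuclideanSpace ℝ (Fin n))) : ℝ≥0∞ :=
  ∫⁻ y in X, ∫⁻ x in X,
    (⨆ z ∈ X, ENNReal.ofReal (menger x y z)) ^ p ∂μH[1] ∂μH[1]

/-- Global curvature energy `U_p(X)`. -/
noncomputable def Up {n : ℕ} (p : ℝ) (X : Set (EuclideanSpace ℝ (Fin n))) : ℝ≥0∞ :=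
  ∫⁻ x in X, (⨆ y ∈ X, ⨆ z ∈ X, ENNReal.ofReal (menger x y z)) ^ p ∂μH[1]

/-- `P ⊆ ℝⁿ` is a simple polygon with finitely many vertices: there are `N ≥ 3` vertices
`v 0, …, v (N-1)` (consecutive ones distinct) such that `P` is the union of the closed
segments `S i = [v i, v (i+1)]`, `i = 0, …, N-2`, consecutive segments meet exactly in their
common vertex, and non-adjacent segments are disjoint. -/
def IsSimplePolygon {n : ℕ} (P : Set (EuclideanSpace ℝ (Fin n))) : Prop :=
  ∃ (N : ℕ) (v : ℕ → EuclideanSpace ℝ (Fin n)),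
    3 ≤ N ∧
    (∀ i, i + 1 < N → v i ≠ v (i + 1)) ∧
    P = ⋃ i ∈ Finset.range (N - 1), segment ℝ (v i) (v (i + 1)) ∧
    (∀ i, i + 2 < N →
      segment ℝ (v i) (v (i + 1)) ∩ segment ℝ (v (i + 1)) (v (i + 2)) = {v (i + 1)}) ∧
    (∀ i j, i + 2 ≤ j → j + 1 < N →
      segment ℝ (v i) (v (i + 1)) ∩ segment ℝ (v j) (v (j + 1)) = ∅)

/-!
A polygon that does not lie on a line has a corner: consecutive vertices `a, b, c` that are not
collinear. The homothety of ratio `s ∈ (0, 1]` centred at `b` maps `a, b, c` to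
`x ∈ [a, b]`, `b` and `z ∈ [b, c]`, and Menger curvature scales like the inverse of a length, so
`sup_{y,z} κ(x, y, z) ≥ κ(a, b, c) / s`. For `p ≥ 1` this dominates a multiple of `1 / s`,
which is not integrable at the corner.
-/

open Set

theorem Isometry.setLIntegral_image_hausdorffMeasure {X Y : Type*} [EMetricSpace X]
    [CompleteSpace X] [MeasurableSpace X] [BorelSpace X] [EMetricSpace Y] [MeasurableSpace Y]
    [BorelSpace Y]
    {f : X → Y} (hf : Isometry f) {d : ℝ} (hd : 0 ≤ d) (s : Set X) (g : Y → ℝ≥0∞) :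
    ∫⁻ y in f '' s, g y ∂μH[d] = ∫⁻ x in s, g (f x) ∂μH[d] := by
  have hfm : MeasurableEmbedding f := hf.isClosedEmbedding.measurableEmbedding
  rw [← Measure.restrict_restrict_of_subset (image_subset_range f s),
    ← hf.map_hausdorffMeasure (Or.inl hd), hfm.restrict_map, hfm.lintegral_map,
    hfm.injective.preimage_image]

theorem setLIntegral_Ioc_div_eq_top {C r : ℝ} (hC : 0 < C) (hr : 0 < r) :
    ∫⁻ t in Ioc 0 r, ENNReal.ofReal (C / t) = ∞ := by
  by_contra h
  have hint : IntegrableOn (fun t : ℝ => C / t) (Ioc 0 r) :=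
    (lintegral_ofReal_ne_top_iff_integrable (by fun_prop)
      (ae_restrict_of_forall_mem measurableSet_Ioc fun t ht => (div_pos hC ht.1).le)).1 h
  have hinv : IntervalIntegrable (fun t : ℝ => t⁻¹) volume 0 r := by
    rw [intervalIntegrable_iff_integrableOn_Ioc_of_le hr.le]
    simpa [IntegrableOn, div_eq_mul_inv, hC.ne'] using hint.const_mul C⁻¹
  simp [hr.ne] at hinv

theorem dist_homothety_homothety {E : Type*} [NormedAddCommGroup E] [NormedSpace ℝ E]
    (c x y : E) (s : ℝ) :
    dist (AffineMap.homothety c s x) (AffineMap.homothety c s y) = |s| * dist x y := by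
  simp [AffineMap.homothety_apply, dist_eq_norm, ← smul_sub, norm_smul]

theorem infDist_homothety_image {E : Type*} [NormedAddCommGroup E] [NormedSpace ℝ E]
    (c x : E) {s : ℝ} (hs : s ≠ 0) (S : Set E) :
    Metric.infDist (AffineMap.homothety c s x) (AffineMap.homothety c s '' S) =
      |s| * Metric.infDist x S := by
  have h : AffineMap.homothety c s = (· + c) ∘ (s • ·) ∘ (· - c) := by
    ext y; simp [AffineMap.homothety_apply]
  rw [h, image_comp, image_comp, Function.comp_apply, Function.comp_apply,
    Metric.infDist_image (isometry_add_right c), image_smul, infDist_smul₀ hs,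
    Real.norm_eq_abs]
  exact congrArg _ (Metric.infDist_image (IsometryEquiv.subRight c).isometry)

section Menger

variable {n : ℕ}

theorem menger_eq_of_ne {x y : EuclideanSpace ℝ (Fin n)} (z : EuclideanSpace ℝ (Fin n))
    (hxy : x ≠ y) :
    menger x y z = 2 * Metric.infDist z (line[ℝ, x, y] : Set _) / (dist x z * dist y z) := by
  unfold menger
  split_ifs with h
  · rfl
  have hz : z ∈ line[ℝ, x, y] := by
    by_cases hyz : y = z
    · exact hyz ▸ right_mem_affineSpan_pair ℝ x y
    by_cases hxz : x = z
    · exact hxz ▸ left_mem_affineSpan_pair ℝ x y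
    have hcol : Collinear ℝ ({x, y, z} : Set _) := by tauto
    exact hcol.mem_affineSpan_of_mem_of_ne (by simp) (by simp) (by simp) hxy
  simp [Metric.infDist_zero_of_mem hz]

theorem menger_pos {x y z : EuclideanSpace ℝ (Fin n)}
    (h : ¬ Collinear ℝ ({x, y, z} : Set (EuclideanSpace ℝ (Fin n)))) : 0 < menger x y z := by
  have hz : z ∉ line[ℝ, x, y] := fun hz => by
    have hcol := collinear_insert_of_mem_affineSpan_pair hz
    rw [insert_comm, pair_comm] at hcol
    exact h hcol
  have hline : IsClosed (line[ℝ, x, y] : Set (EuclideanSpace ℝ (Fin n))) :=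
    AffineSubspace.closed_of_finiteDimensional _
  have hdist := (hline.notMem_iff_infDist_pos ⟨x, left_mem_affineSpan_pair ℝ x y⟩).1 hz
  rw [menger_eq_of_ne z (ne₁₂_of_not_collinear h)]
  have := dist_pos.2 (ne₁₃_of_not_collinear h)
  have := dist_pos.2 (ne₂₃_of_not_collinear h)
  positivity

theorem menger_homothety (c x y z : EuclideanSpace ℝ (Fin n)) {s : ℝ} (hs : s ≠ 0) :
    menger (AffineMap.homothety c s x) (AffineMap.homothety c s y) (AffineMap.homothety c s z) =
      |s|⁻¹ * menger x y z := by
  obtain rfl | hxy := eq_or_ne x y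
  · simp [menger]
  have hinj : Function.Injective (AffineMap.homothety c s) :=
    (AffineEquiv.homothetyUnitsMulHom c (Units.mk0 s hs)).injective
  rw [menger_eq_of_ne _ hxy, menger_eq_of_ne _ (hinj.ne hxy), ← image_pair,
    ← AffineSubspace.map_span, AffineSubspace.coe_map, infDist_homothety_image c z hs,
    dist_homothety_homothety, dist_homothety_homothety]
  have := abs_pos.2 hs
  field_simp

noncomputable def globalCurvature (X : Set (EuclideanSpace ℝ (Fin n)))
    (x : EuclideanSpace ℝ (Fin n)) : ℝ≥0∞ :=
  ⨆ y ∈ X, ⨆ z ∈ X, ENNReal.ofReal (menger x y z)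

theorem Up_eq_lintegral_globalCurvature (p : ℝ) (X : Set (EuclideanSpace ℝ (Fin n))) :
    Up p X = ∫⁻ x in X, globalCurvature X x ^ p ∂μH[1] :=
  rfl

theorem ofReal_menger_div_le_globalCurvature_lineMap {X : Set (EuclideanSpace ℝ (Fin n))}
    {a b c : EuclideanSpace ℝ (Fin n)} (habX : segment ℝ a b ⊆ X) (hbcX : segment ℝ b c ⊆ X)
    {s : ℝ} (hs : s ∈ Ioc 0 1) :
    ENNReal.ofReal (menger a b c / s) ≤ globalCurvature X (AffineMap.lineMap b a s) := by
  have hbX : b ∈ X := habX (right_mem_segment ℝ a b)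
  have hcX : AffineMap.lineMap b c s ∈ X :=
    hbcX ((segment_eq_image_lineMap ℝ b c).symm ▸ ⟨s, ⟨hs.1.le, hs.2⟩, rfl⟩)
  have hscale :
      menger (AffineMap.lineMap b a s) b (AffineMap.lineMap b c s) = menger a b c / s := by
    have h := menger_homothety b a b c hs.1.ne'
    rwa [AffineMap.homothety_apply_same, AffineMap.homothety_eq_lineMap,
      AffineMap.homothety_eq_lineMap, abs_of_pos hs.1, inv_mul_eq_div] at h
  rw [← hscale]
  exact le_iSup₂_of_le b hbX (le_iSup₂_of_le _ hcX le_rfl)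

theorem Up_eq_top_of_not_collinear_of_segment_subset {X : Set (EuclideanSpace ℝ (Fin n))}
    {a b c : EuclideanSpace ℝ (Fin n)}
    (hK : ¬ Collinear ℝ ({a, b, c} : Set (EuclideanSpace ℝ (Fin n))))
    (habX : segment ℝ a b ⊆ X) (hbcX : segment ℝ b c ⊆ X) {p : ℝ} (hp : 1 ≤ p) :
    Up p X = ∞ := by
  set K := menger a b c
  set d := dist b a
  have hK0 : 0 < K := menger_pos hK
  have hd : 0 < d := dist_pos.2 (ne₁₂_of_not_collinear hK).symm
  set f : ℝ → EuclideanSpace ℝ (Fin n) := fun t => AffineMap.lineMap b a (t / d)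
  have hf : Isometry f := Isometry.of_dist_eq fun t₁ t₂ => by
    rw [dist_lineMap_lineMap, Real.dist_eq, Real.dist_eq, ← sub_div, abs_div, abs_of_pos hd,
      div_mul_cancel₀ _ hd.ne']
  have hfX : f '' Ioc 0 d ⊆ X := by
    rintro _ ⟨t, ht, rfl⟩
    refine habX (segment_symm ℝ a b ▸ (segment_eq_image_lineMap ℝ b a).symm ▸ ?_)
    exact ⟨t / d, ⟨(div_pos ht.1 hd).le, div_le_one_of_le₀ ht.2 hd.le⟩, rfl⟩
  have hbound :
      ∀ t ∈ Ioc 0 d, ENNReal.ofReal (K ^ p * d / t) ≤ globalCurvature X (f t) ^ p := by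
    intro t ht
    have hs : t / d ∈ Ioc (0 : ℝ) 1 := ⟨div_pos ht.1 hd, div_le_one_of_le₀ ht.2 hd.le⟩
    have hdt : 1 ≤ d / t := (one_le_div₀ ht.1).2 ht.2
    have hreal : K ^ p * d / t ≤ (K / (t / d)) ^ p := by
      rw [div_div_eq_mul_div, mul_div_assoc, mul_div_assoc, Real.mul_rpow hK0.le (by linarith)]
      gcongr
      exact Real.self_le_rpow_of_one_le hdt hp
    calc ENNReal.ofReal (K ^ p * d / t)
        ≤ ENNReal.ofReal (K / (t / d)) ^ p := by
          rw [ENNReal.ofReal_rpow_of_nonneg (div_pos hK0 hs.1).le (by linarith)]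
          exact ENNReal.ofReal_le_ofReal hreal
      _ ≤ globalCurvature X (f t) ^ p :=
          ENNReal.rpow_le_rpow (ofReal_menger_div_le_globalCurvature_lineMap habX hbcX hs)
            (by linarith)
  rw [← top_le_iff, Up_eq_lintegral_globalCurvature]
  calc ∞ = ∫⁻ t in Ioc 0 d, ENNReal.ofReal (K ^ p * d / t) :=
        (setLIntegral_Ioc_div_eq_top (by positivity) hd).symm
    _ ≤ ∫⁻ t in Ioc 0 d, globalCurvature X (f t) ^ p :=
        setLIntegral_mono' measurableSet_Ioc hbound
    _ = ∫⁻ x in f '' Ioc 0 d, globalCurvature X x ^ p ∂μH[1] := by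
        rw [hf.setLIntegral_image_hausdorffMeasure zero_le_one, hausdorffMeasure_real]
    _ ≤ ∫⁻ x in X, globalCurvature X x ^ p ∂μH[1] := lintegral_mono_set hfX

end Menger

theorem exists_not_collinear_of_not_collinear_iUnion_segment {V : Type*} [AddCommGroup V]
    [Module ℝ V] {N : ℕ} {v : ℕ → V} (hne : ∀ i, i + 1 < N → v i ≠ v (i + 1))
    (h : ¬ Collinear ℝ (⋃ i ∈ Finset.range (N - 1), segment ℝ (v i) (v (i + 1)))) :
    ∃ i, i + 2 < N ∧ ¬ Collinear ℝ ({v i, v (i + 1), v (i + 2)} : Set V) := by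
  by_contra! hcol
  set L := line[ℝ, v 0, v 1]
  have hmem : ∀ j, j < N → v j ∈ L := by
    intro j
    induction j using Nat.strong_induction_on with
    | _ j ih =>
      match j with
      | 0 => exact fun _ => left_mem_affineSpan_pair ℝ _ _
      | 1 => exact fun _ => right_mem_affineSpan_pair ℝ _ _
      | k + 2 =>
        intro hk
        have hline : v (k + 2) ∈ line[ℝ, v k, v (k + 1)] :=
          (hcol k hk).mem_affineSpan_of_mem_of_ne (by simp) (by simp) (by simp)
            (hne k (by omega))
        exact affineSpan_pair_le_of_mem_of_mem (ih k (by omega) (by omega))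
          (ih (k + 1) (by omega) (by omega)) hline
  have hsub : (⋃ i ∈ Finset.range (N - 1), segment ℝ (v i) (v (i + 1))) ⊆ L := by
    simp only [iUnion_subset_iff, Finset.mem_range]
    intro i hi
    exact L.convex.segment_subset (hmem i (by omega)) (hmem (i + 1) (by omega))
  have hL : Collinear ℝ (L : Set V) := by
    rw [Collinear, ← AffineSubspace.direction_eq_vectorSpan, direction_affineSpan]
    exact collinear_pair ℝ _ _
  exact h (hL.subset hsub)

/-- A simple polygon not contained in a straight line has infinite global curvature
energy for `p ≥ 1`. -/
theorem Up_eq_top_of_isSimplePolygon {n : ℕ} (P : Set (EuclideanSpace ℝ (Fin n)))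
    (hP : IsSimplePolygon P) (hcol : ¬ Collinear ℝ P) (p : ℝ) (hp : 1 ≤ p) :
    Up p P = ⊤ := by
  obtain ⟨N, v, -, hne, rfl, -, -⟩ := hP
  obtain ⟨i, hi, hK⟩ := exists_not_collinear_of_not_collinear_iUnion_segment hne hcol
  have hseg : ∀ j, j + 1 < N → segment ℝ (v j) (v (j + 1)) ⊆
      ⋃ i ∈ Finset.range (N - 1), segment ℝ (v i) (v (i + 1)) := fun j hj =>
    subset_biUnion_of_mem (u := fun i => segment ℝ (v i) (v (i + 1)))
      (Finset.mem_coe.2 (Finset.mem_range.2 (by omega)))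
  exact Up_eq_top_of_not_collinear_of_segment_subset hK (hseg i (by omega))
    (hseg (i + 1) (by omega)) hp
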